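/- Let c' be a conservative pseudo-carry for (a,b) and let s and s' be the corresponding true and pseudo sum bits. If s k ≠ s' k for some k, then c k = true and c' k = false, and there exist i, j with 1 ≤ i ≤ k ≤ j ≤ n such that (a,b) generates a carry chain from i to j; in other words, in a conservative pseudo-adder errors occur only at positions lying inside carry chains. -/

import Mathlib

/-- The carry sequence: `c 0 = false` and
`c (k+1) = (a k ∧ b k) ∨ (a k ∧ c k) ∨ (b k ∧ c k)`. -/
def carry (a b : ℕ → Bool) : ℕ → Bool
  | 0 => false
  | k + 1 => (a k && b k) || (a k && carry a b k) || (b k && carry a b k)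

/-- The true sum bits: `s k = a k ⊕ b k ⊕ c k`. -/
def sumBit (a b : ℕ → Bool) (k : ℕ) : Bool :=
  Bool.xor (Bool.xor (a k) (b k)) (carry a b k)

/-- `(a,b)` generates a carry chain from `i` to `j` (for `1 ≤ i ≤ j ≤ n`):
`a (i-1) = b (i-1) = true`, `a k ≠ b k` for `i ≤ k ≤ j-1`, and `a j = b j`. -/
def IsCarryChain (n : ℕ) (a b : ℕ → Bool) (i j : ℕ) : Prop :=
  1 ≤ i ∧ i ≤ j ∧ j ≤ n ∧ a (i - 1) = true ∧ b (i - 1) = true ∧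
    (∀ k, i ≤ k → k ≤ j - 1 → a k ≠ b k) ∧ a j = b j

/-- The pseudo sum bits: `s' k = a k ⊕ b k ⊕ c' k`. -/
def pseudoSumBit (a b c' : ℕ → Bool) (k : ℕ) : Bool :=
  Bool.xor (Bool.xor (a k) (b k)) (c' k)

/-!
An error at position `k` means `c k ≠ c' k`, and conservativity forces `c k = true`,
`c' k = false`. A set carry at `k` was generated at the last position `m < k` with
`a m = b m = true` and propagated through positions where `a ≠ b`; since the inputs vanish
from `n` on, some `j` with `k ≤ j ≤ n` has `a j = b j`, and the least such `j` ends the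
carry chain from `m + 1`.
-/

section Carry

variable {a b : ℕ → Bool} {m : ℕ}

theorem carry_succ_of_eq (h : a m = b m) : carry a b (m + 1) = a m := by
  cases ha : a m <;> simp_all [carry]

theorem carry_succ_of_ne (h : a m ≠ b m) : carry a b (m + 1) = carry a b m := by
  cases ha : a m <;> cases hb : b m <;> simp_all [carry]

theorem le_of_carry_eq_true {n k : ℕ} (ha : ∀ k, n ≤ k → a k = false)
    (hb : ∀ k, n ≤ k → b k = false) (hk : carry a b k = true) : k ≤ n := by
  by_contra! hnk
  obtain ⟨m, rfl⟩ : ∃ m, k = m + 1 := Nat.exists_eq_succ_of_ne_zero (by omega)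
  have ham := ha m (by omega)
  rw [carry_succ_of_eq (ham.trans (hb m (by omega)).symm), ham] at hk
  exact Bool.false_ne_true hk

theorem exists_generate_of_carry_eq_true {k : ℕ} (hk : carry a b k = true) :
    ∃ m < k, a m = true ∧ b m = true ∧ ∀ l, m < l → l < k → a l ≠ b l := by
  induction k with
  | zero => simp [carry] at hk
  | succ k ih =>
    by_cases hab : a k = b k
    · rw [carry_succ_of_eq hab] at hk
      exact ⟨k, k.lt_succ_self, hk, hab ▸ hk, fun l hkl hlk => by omega⟩
    · rw [carry_succ_of_ne hab] at hk
      obtain ⟨m, hmk, ham, hbm, hprop⟩ := ih hk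
      refine ⟨m, hmk.trans k.lt_succ_self, ham, hbm, fun l hml hlk => ?_⟩
      rcases Nat.lt_succ_iff_lt_or_eq.mp hlk with hlk | rfl
      exacts [hprop l hml hlk, hab]

theorem exists_isCarryChain_of_carry_eq_true {n k : ℕ} (ha : ∀ k, n ≤ k → a k = false)
    (hb : ∀ k, n ≤ k → b k = false) (hk : carry a b k = true) :
    ∃ i j, i ≤ k ∧ k ≤ j ∧ IsCarryChain n a b i j := by
  classical
  obtain ⟨m, hmk, ham, hbm, hprop⟩ := exists_generate_of_carry_eq_true hk
  have hkn := le_of_carry_eq_true ha hb hk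
  have habn : a n = b n := (ha n le_rfl).trans (hb n le_rfl).symm
  have hend : ∃ j, k ≤ j ∧ a j = b j := ⟨n, hkn, habn⟩
  obtain ⟨hkj, habj⟩ := Nat.find_spec hend
  have hjn : Nat.find hend ≤ n := Nat.find_le ⟨hkn, habn⟩
  refine ⟨m + 1, Nat.find hend, hmk, hkj, by omega, by omega, hjn, ham, hbm,
    fun l hml hlj => ?_, habj⟩
  rcases lt_or_ge l k with hlk | hkl
  · exact hprop l hml hlk
  · exact fun habl => Nat.find_min hend (by omega) ⟨hkl, habl⟩

end Carry

theorem carry_ne_of_sumBit_ne {a b c' : ℕ → Bool} {k : ℕ}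
    (h : sumBit a b k ≠ pseudoSumBit a b c' k) : carry a b k ≠ c' k :=
  fun hc => h (by simp [sumBit, pseudoSumBit, hc])

theorem conservative_errors_inside_carry_chains_general
    (n : ℕ) (a b : ℕ → Bool)
    (ha : ∀ k, n ≤ k → a k = false) (hb : ∀ k, n ≤ k → b k = false)
    (c' : ℕ → Bool)
    (hcons : ∀ k, c' k = true → carry a b k = true)
    (k : ℕ) (herr : sumBit a b k ≠ pseudoSumBit a b c' k) :
    carry a b k = true ∧ c' k = false ∧
      ∃ i j, i ≤ k ∧ k ≤ j ∧ IsCarryChain n a b i j := by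
  have hne := carry_ne_of_sumBit_ne herr
  have hck : carry a b k = true := by
    cases hc : c' k
    · simpa [hc] using hne
    · exact hcons k hc
  have hc'k : c' k = false := by
    cases hc : c' k
    · rfl
    · exact absurd (hck.trans hc.symm) hne
  exact ⟨hck, hc'k, exists_isCarryChain_of_carry_eq_true ha hb hck⟩

/-- In a conservative pseudo-adder, errors occur only at positions lying inside
carry chains: if `s k ≠ s' k` then `c k = true`, `c' k = false`, and `k` lies in
some carry chain generated by `(a,b)`. -/
theorem conservative_errors_inside_carry_chains
    (n : ℕ) (hn : 1 ≤ n) (a b : ℕ → Bool)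
    (ha : ∀ k, n ≤ k → a k = false) (hb : ∀ k, n ≤ k → b k = false)
    (c' : ℕ → Bool) (hc'0 : c' 0 = false)
    (hcons : ∀ k, c' k = true → carry a b k = true)
    (k : ℕ) (herr : sumBit a b k ≠ pseudoSumBit a b c' k) :
    carry a b k = true ∧ c' k = false ∧
      ∃ i j, i ≤ k ∧ k ≤ j ∧ IsCarryChain n a b i j :=
  conservative_errors_inside_carry_chains_general n a b ha hb c' hcons k herr
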